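/- arXiv:2406.19929 — 3 statements merged into one kernel-verified Lean document; each statement's English description precedes it below -/
import Mathlib

section
/- Let τ belong to class 𝒯 and suppose that x = 0 is a limit point of the set of left partition endpoints {a_i}. Then lim_{x→0⁺} τ'(x) = +∞. -/
open Set Filter MeasureTheory Topology

structure PCT where
  τ : ℝ → ℝ
  a : ℕ → ℝ
  b : ℕ → ℝ
  da : ℕ → ℝ
  maps_to : Set.MapsTo τ (Set.Icc 0 1) (Set.Icc 0 1)
  lt : ∀ i, a i < b i
  sub : ∀ i, Set.Ioo (a i) (b i) ⊆ Set.Icc (0:ℝ) 1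
  disj : Pairwise (Function.onFun Disjoint fun i => Set.Ioo (a i) (b i))
  null : volume (Set.Icc (0:ℝ) 1 \ ⋃ i, Set.Ioo (a i) (b i)) = 0
  mono : ∀ i, StrictMonoOn τ (Set.Ioo (a i) (b i))
  conv : ∀ i, ConvexOn ℝ (Set.Ioo (a i) (b i)) τ
  diff : ∀ i, ∀ x ∈ Set.Ioo (a i) (b i), DifferentiableAt ℝ τ x
  lim_zero : ∀ i, Filter.Tendsto τ (nhdsWithin (a i) (Set.Ioi (a i))) (nhds 0)
  deriv_lim : ∀ i, Filter.Tendsto (deriv τ) (nhdsWithin (a i) (Set.Ioi (a i))) (nhds (da i))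
  da_pos : ∀ i, 0 < da i
  sum_inv : Summable (fun i => 1 / da i)
  expand : (¬ AccPt (0:ℝ) (Filter.principal (Set.range a))) → ∃ i, a i = 0 ∧ 1 < da i

/-- The interval `(c,d)` follows a single sequence of branches under the first `n`
iterates of `τ`. -/
def IsBranchSeq (T : PCT) (n : ℕ) (c d : ℝ) : Prop :=
  c < d ∧ ∀ k < n, ∃ i, T.τ^[k] '' Set.Ioo c d ⊆ Set.Ioo (T.a i) (T.b i)

/-- `(c,d)` is a maximal open interval on which `τ^n` is a single monotone branch,
i.e. an element of the partition `𝒫⁽ⁿ⁾`. -/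
def IsBranchInterval (T : PCT) (n : ℕ) (c d : ℝ) : Prop :=
  IsBranchSeq T n c d ∧
    ∀ c' d', c' ≤ c → d ≤ d' → IsBranchSeq T n c' d' → c' = c ∧ d' = d

/-
Convexity makes `τ'` at least `τ_i'(a_i)` on the whole branch `I_i`, and summability of
`1 / τ_i'(a_i)` leaves only finitely many branches with `τ_i'(a_i)` below any bound `M`.
Since `0` is a limit point of the `a_i`, no branch starts at `0`, so these finitely many
branches stay a positive distance away from `0`; every branch meeting a small enough
neighbourhood of `0` therefore has `τ' ≥ M` on it.
-/

theorem tendsto_atTop_inf_principal_iUnion {α ι β : Type*} [Preorder β] {l : Filter α}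
    {f : α → β} {g : ι → β} {U : ι → Set α} (hg : Tendsto g cofinite atTop)
    (hgf : ∀ i, ∀ x ∈ U i, g i ≤ f x) (hU : ∀ i, ∀ᶠ x in l, x ∉ U i) :
    Tendsto f (l ⊓ 𝓟 (⋃ i, U i)) atTop := by
  refine tendsto_atTop.2 fun M => ?_
  have hsmall : {i | ¬ M ≤ g i}.Finite := eventually_cofinite.1 (tendsto_atTop.1 hg M)
  have hfar : ∀ᶠ x in l, ∀ i ∈ {i | ¬ M ≤ g i}, x ∉ U i :=
    hsmall.eventually_all.2 fun i _ => hU i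
  filter_upwards [mem_inf_of_left hfar, mem_inf_of_right (mem_principal_self _)]
    with x hx hxU
  obtain ⟨i, hxi⟩ := mem_iUnion.1 hxU
  exact (not_not.1 fun h => hx i h hxi).trans (hgf i x hxi)

namespace PCT

variable (T : PCT)

theorem da_le_deriv (i : ℕ) {x : ℝ} (hx : x ∈ Ioo (T.a i) (T.b i)) : T.da i ≤ deriv T.τ x := by
  have hmono : MonotoneOn (deriv T.τ) (Ioo (T.a i) (T.b i)) :=
    (T.conv i).monotoneOn_deriv (T.diff i)
  refine le_of_tendsto (T.deriv_lim i) ?_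
  filter_upwards [Ioo_mem_nhdsGT_of_mem ⟨le_rfl, hx.1⟩] with y hy
  exact hmono ⟨hy.1, hy.2.trans hx.2⟩ hx hy.2.le

theorem tendsto_da_cofinite_atTop : Tendsto T.da cofinite atTop := by
  have hinv : Tendsto (fun i => (T.da i)⁻¹) cofinite (𝓝[>] 0) :=
    tendsto_nhdsWithin_iff.2 ⟨by simpa only [one_div] using T.sum_inv.tendsto_cofinite_zero,
      .of_forall fun i => inv_pos.2 (T.da_pos i)⟩
  simpa only [Pi.inv_def, inv_inv] using hinv.inv_tendsto_nhdsGT_zero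

theorem a_nonneg (i : ℕ) : 0 ≤ T.a i :=
  (closure_minimal (T.sub i) isClosed_Icc
    (by rw [closure_Ioo (T.lt i).ne]; exact left_mem_Icc.2 (T.lt i).le)).1

theorem a_pos_of_accPt (h0 : AccPt (0:ℝ) (𝓟 (range T.a))) (i : ℕ) : 0 < T.a i := by
  refine (T.a_nonneg i).lt_of_ne fun hi => ?_
  obtain ⟨_, ⟨hjb, j, rfl⟩, hj0⟩ :=
    accPt_iff_nhds.1 h0 (Iio (T.b i)) (Iio_mem_nhds (hi ▸ T.lt i))
  have hij : i ≠ j := fun h => hj0 (h ▸ hi.symm)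
  have hsep := Ioo_disjoint_Ioo.1 (T.disj hij)
  rw [← hi, max_eq_right (T.a_nonneg j)] at hsep
  exact (lt_min hjb (T.lt j)).not_ge hsep

end PCT

/-- Lemma 2.1.3, first claim. If `τ ∈ 𝒯` and `0` is a limit point of the
left partition endpoints `{aᵢ}`, then `τ'(x) → +∞` as `x → 0⁺` (through the set where the
branch derivative is defined, i.e. the union of the branch intervals). -/
theorem deriv_tendsto_atTop_of_accPt (T : PCT)
    (h0 : AccPt (0:ℝ) (Filter.principal (Set.range T.a))) :
    Filter.Tendsto (deriv T.τ) (nhdsWithin 0 (⋃ i, Set.Ioo (T.a i) (T.b i)))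
      Filter.atTop :=
  tendsto_atTop_inf_principal_iUnion T.tendsto_da_cofinite_atTop
    (fun i _ hx => T.da_le_deriv i hx) fun i =>
      (eventually_lt_nhds (T.a_pos_of_accPt h0 i)).mono fun _ hx hxi => (hxi.1.trans hx).false
end

section
/- Let τ belong to class 𝒯 and set K := Σ_{i≥1} 1/τ_i'(a_i) < ∞. Then for every n ≥ 1, the branches of τ^n satisfy Σ_{i≥1} 1/(τ_i^{(n)})'(a_i^{(n)}) ≤ K^n < ∞, where (τ_i^{(n)})'(a_i^{(n)}) is defined by right-continuity. -/
open Set Filter MeasureTheory Topology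

namespace PCTaux

/-- The right limit of the derivative at the left endpoint is a lower bound for the
derivative on the branch interval (by convexity). -/
lemma deriv_ge (T : PCT) (i : ℕ) {y : ℝ} (hy : y ∈ Set.Ioo (T.a i) (T.b i)) :
    T.da i ≤ deriv T.τ y := by
  refine le_of_tendsto (T.deriv_lim i) ?_
  filter_upwards [Ioo_mem_nhdsGT_of_mem (⟨le_refl _, hy.1⟩ : T.a i ∈ Set.Ico (T.a i) y)]
    with x hx
  exact (T.conv i).monotoneOn_deriv (T.diff i) ⟨hx.1, hx.2.trans hy.2⟩ hy hx.2.le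

/-- Sandwich lemma: a point between two points following the same branch sequence
follows that branch sequence as well. -/
lemma sandwich (T : PCT) (n : ℕ) (ι : ℕ → ℕ) {x y z : ℝ}
    (hx : ∀ k < n, T.τ^[k] x ∈ Set.Ioo (T.a (ι k)) (T.b (ι k)))
    (hz : ∀ k < n, T.τ^[k] z ∈ Set.Ioo (T.a (ι k)) (T.b (ι k)))
    (hxy : x ≤ y) (hyz : y ≤ z) :
    ∀ k < n, T.τ^[k] y ∈ Set.Ioo (T.a (ι k)) (T.b (ι k)) := by
  have key : ∀ k, k ≤ n → T.τ^[k] x ≤ T.τ^[k] y ∧ T.τ^[k] y ≤ T.τ^[k] z := by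
    intro k
    induction k with
    | zero => exact fun _ => ⟨hxy, hyz⟩
    | succ k ih =>
      intro hk
      have hk' : k < n := hk
      obtain ⟨h1, h2⟩ := ih hk'.le
      have hxk := hx k hk'
      have hzk := hz k hk'
      have hyk : T.τ^[k] y ∈ Set.Ioo (T.a (ι k)) (T.b (ι k)) :=
        ⟨lt_of_lt_of_le hxk.1 h1, lt_of_le_of_lt h2 hzk.2⟩
      have m := (T.mono (ι k)).monotoneOn
      simp only [Function.iterate_succ_apply']
      exact ⟨m hxk hyk h1, m hyk hzk h2⟩
  intro k hk
  obtain ⟨h1, h2⟩ := key k hk.le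
  exact ⟨lt_of_lt_of_le (hx k hk).1 h1, lt_of_le_of_lt h2 (hz k hk).2⟩

/-- Chain rule for the iterates along a branch sequence. -/
lemma hasDerivAt_iterate (T : PCT) (n : ℕ) (ι : ℕ → ℕ) {x : ℝ}
    (hx : ∀ k < n, T.τ^[k] x ∈ Set.Ioo (T.a (ι k)) (T.b (ι k))) :
    HasDerivAt (T.τ^[n]) (∏ k ∈ Finset.range n, deriv T.τ (T.τ^[k] x)) x := by
  induction n with
  | zero => simpa using hasDerivAt_id x
  | succ m ih =>
    have h1 : HasDerivAt (T.τ^[m]) (∏ k ∈ Finset.range m, deriv T.τ (T.τ^[k] x)) x :=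
      ih (fun k hk => hx k (hk.trans m.lt_succ_self))
    have hm := hx m m.lt_succ_self
    have h2 : HasDerivAt T.τ (deriv T.τ (T.τ^[m] x)) (T.τ^[m] x) :=
      (T.diff (ι m) _ hm).hasDerivAt
    rw [Function.iterate_succ', Finset.prod_range_succ, mul_comm]
    exact h2.comp x h1

/-- Sum of products over all sequences of length `n` equals the `n`-th power. -/
lemma tsum_pi_prod (f : ℕ → ℝ) (h0 : ∀ i, 0 ≤ f i) (hf : Summable f) :
    ∀ n : ℕ, Summable (fun g : Fin n → ℕ => ∏ k, f (g k)) ∧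
      (∑' g : Fin n → ℕ, ∏ k, f (g k)) = (∑' i, f i) ^ n := by
  intro n
  induction n with
  | zero =>
    haveI : Unique (Fin 0 → ℕ) := ⟨⟨Fin.elim0⟩, fun g => funext fun i => i.elim0⟩
    have h : HasSum (fun g : Fin 0 → ℕ => ∏ k, f (g k)) 1 := by
      simpa using hasSum_unique (fun g : Fin 0 → ℕ => ∏ k, f (g k))
    exact ⟨h.summable, by rw [h.tsum_eq, pow_zero]⟩
  | succ m ih =>
    obtain ⟨hs, he⟩ := ih
    have hG0 : ∀ g : Fin m → ℕ, 0 ≤ ∏ k, f (g k) := fun g =>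
      Finset.prod_nonneg fun k _ => h0 _
    have hprod : Summable (fun p : ℕ × (Fin m → ℕ) => f p.1 * ∏ k, f (p.2 k)) :=
      Summable.mul_of_nonneg (f := f) (g := fun g : Fin m → ℕ => ∏ k, f (g k)) hf hs h0 hG0
    have hcomp : (fun g : Fin (m + 1) → ℕ => ∏ k, f (g k)) ∘ (Fin.consEquiv (fun _ => ℕ))
        = fun p : ℕ × (Fin m → ℕ) => f p.1 * ∏ k, f (p.2 k) := by
      funext p
      simp [Fin.prod_univ_succ]
    have hsum' : Summable (fun g : Fin (m + 1) → ℕ => ∏ k, f (g k)) := by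
      rw [← (Fin.consEquiv (fun _ => ℕ)).summable_iff, hcomp]; exact hprod
    refine ⟨hsum', ?_⟩
    have ht : ∑' g : Fin (m + 1) → ℕ, ∏ k, f (g k)
        = ∑' p : ℕ × (Fin m → ℕ), f p.1 * ∏ k, f (p.2 k) := by
      rw [← (Fin.consEquiv (fun _ => ℕ)).tsum_eq]
      exact tsum_congr fun p => congrFun hcomp p
    rw [ht, ← Summable.tsum_mul_tsum hf hs hprod, he, pow_succ, mul_comm]

/-- Two maximal branch intervals with the same branch sequence coincide. -/
lemma branch_eq (T : PCT) (n : ℕ) {c₁ d₁ c₂ d₂ : ℝ} (ι : ℕ → ℕ)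
    (h₁ : IsBranchInterval T n c₁ d₁) (h₂ : IsBranchInterval T n c₂ d₂)
    (hι₁ : ∀ x ∈ Set.Ioo c₁ d₁, ∀ k < n, T.τ^[k] x ∈ Set.Ioo (T.a (ι k)) (T.b (ι k)))
    (hι₂ : ∀ x ∈ Set.Ioo c₂ d₂, ∀ k < n, T.τ^[k] x ∈ Set.Ioo (T.a (ι k)) (T.b (ι k))) :
    c₁ = c₂ ∧ d₁ = d₂ := by
  have hcd₁ : c₁ < d₁ := h₁.1.1
  have hcd₂ : c₂ < d₂ := h₂.1.1
  obtain ⟨x₁, hx₁⟩ := exists_between hcd₁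
  obtain ⟨x₂, hx₂⟩ := exists_between hcd₂
  have hS : ∀ y ∈ Set.Ioo (min c₁ c₂) (max d₁ d₂), ∀ k < n,
      T.τ^[k] y ∈ Set.Ioo (T.a (ι k)) (T.b (ι k)) := by
    intro y hy
    by_cases hy₁ : y ∈ Set.Ioo c₁ d₁
    · exact hι₁ y hy₁
    by_cases hy₂ : y ∈ Set.Ioo c₂ d₂
    · exact hι₂ y hy₂
    rcases lt_or_ge y d₁ with h | h
    · have hyc₁ : y ≤ c₁ := by
        by_contra hcon
        exact hy₁ ⟨lt_of_not_ge hcon, h⟩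
      have hyc₂ : c₂ < y := by
        rcases min_lt_iff.mp hy.1 with h' | h'
        · exact absurd h' (not_lt.mpr hyc₁)
        · exact h'
      have hyd₂ : d₂ ≤ y := by
        by_contra hcon
        exact hy₂ ⟨hyc₂, lt_of_not_ge hcon⟩
      exact sandwich T n ι (hι₂ x₂ hx₂) (hι₁ x₁ hx₁)
        (le_trans hx₂.2.le hyd₂) (le_trans hyc₁ hx₁.1.le)
    · have hyd₂ : y < d₂ := by
        rcases lt_max_iff.mp hy.2 with h' | h'
        · exact absurd h' (not_lt.mpr h)
        · exact h'
      have hyc₂ : y ≤ c₂ := by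
        by_contra hcon
        exact hy₂ ⟨lt_of_not_ge hcon, hyd₂⟩
      exact sandwich T n ι (hι₁ x₁ hx₁) (hι₂ x₂ hx₂)
        (le_trans hx₁.2.le h) (le_trans hyc₂ hx₂.1.le)
  have hseq' : IsBranchSeq T n (min c₁ c₂) (max d₁ d₂) := by
    refine ⟨lt_of_le_of_lt (min_le_left _ _) (lt_of_lt_of_le hcd₁ (le_max_left _ _)), ?_⟩
    intro k hk
    exact ⟨ι k, by rintro _ ⟨y, hy, rfl⟩; exact hS y hy k hk⟩
  obtain ⟨e₁, e₂⟩ := h₁.2 _ _ (min_le_left _ _) (le_max_left _ _) hseq'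
  obtain ⟨e₃, e₄⟩ := h₂.2 _ _ (min_le_right _ _) (le_max_right _ _) hseq'
  exact ⟨e₁ ▸ e₃, e₂ ▸ e₄⟩

end PCTaux

/-- Proposition 2.1.7 (e). Let `τ ∈ 𝒯` and `K = Σᵢ 1/τᵢ'(aᵢ) < ∞`.
For `n ≥ 1`, if `(c i, d i)` is a family of pairwise distinct branch intervals of `τⁿ`
and `dc i` is the right limit at `c i` of the derivative of `τⁿ` (i.e. the value
`(τᵢ⁽ⁿ⁾)'(aᵢ⁽ⁿ⁾)` defined by right-continuity), then
`Σᵢ 1/(τᵢ⁽ⁿ⁾)'(aᵢ⁽ⁿ⁾) ≤ Kⁿ < ∞`. -/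
theorem iterate_sum_inv_deriv_le (T : PCT) (n : ℕ) (hn : 1 ≤ n)
    (c d dc : ℕ → ℝ)
    (hbr : ∀ i, IsBranchInterval T n (c i) (d i))
    (hinj : Function.Injective (fun i => (c i, d i)))
    (hdc : ∀ i, Filter.Tendsto (deriv (T.τ^[n]))
      (nhdsWithin (c i) (Set.Ioi (c i))) (nhds (dc i))) :
    Summable (fun i => 1 / dc i) ∧
      (∑' i, 1 / dc i) ≤ (∑' i, 1 / T.da i) ^ n := by
  classical
  have hseq : ∀ i, IsBranchSeq T n (c i) (d i) := fun i => (hbr i).1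
  choose! F hF using fun i => (hseq i).2
  have hFmem : ∀ i, ∀ x ∈ Set.Ioo (c i) (d i), ∀ k < n,
      T.τ^[k] x ∈ Set.Ioo (T.a (F i k)) (T.b (F i k)) :=
    fun i x hx k hk => hF i k hk ⟨x, hx, rfl⟩
  -- lower bound for dc
  set P : ℕ → ℝ := fun i => ∏ k ∈ Finset.range n, T.da (F i k) with hP
  have hPpos : ∀ i, 0 < P i := fun i => Finset.prod_pos fun k _ => T.da_pos _
  have hPd : ∀ i, P i ≤ dc i := by
    intro i
    refine ge_of_tendsto (hdc i) ?_
    filter_upwards [Ioo_mem_nhdsGT_of_mem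
      (⟨le_refl _, (hseq i).1⟩ : c i ∈ Set.Ico (c i) (d i))] with x hx
    have hD := (PCTaux.hasDerivAt_iterate T n (F i) (fun k hk => hFmem i x hx k hk)).deriv
    rw [hD]
    exact Finset.prod_le_prod (fun k _ => (T.da_pos _).le)
      (fun k hk => PCTaux.deriv_ge T _ (hFmem i x hx k (Finset.mem_range.1 hk)))
  have hdcpos : ∀ i, 0 < dc i := fun i => lt_of_lt_of_le (hPpos i) (hPd i)
  -- the injective coding of branch intervals by branch sequences
  set G : ℕ → (Fin n → ℕ) := fun i k => F i k.val with hG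
  have hGinj : Function.Injective G := by
    intro i j hij
    have hFij : ∀ k < n, F i k = F j k := fun k hk => congrFun hij ⟨k, hk⟩
    have h2 : ∀ x ∈ Set.Ioo (c j) (d j), ∀ k < n,
        T.τ^[k] x ∈ Set.Ioo (T.a (F i k)) (T.b (F i k)) := by
      intro x hx k hk
      rw [hFij k hk]
      exact hFmem j x hx k hk
    obtain ⟨hc, hd⟩ := PCTaux.branch_eq T n (F i) (hbr i) (hbr j) (hFmem i) h2
    exact hinj (show (c i, d i) = (c j, d j) by rw [hc, hd])
  -- comparison with the sum over all sequences
  obtain ⟨hsum, hval⟩ := PCTaux.tsum_pi_prod (fun i => 1 / T.da i)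
    (fun i => one_div_nonneg.mpr (T.da_pos i).le) T.sum_inv n
  have hbound : ∀ i, 1 / dc i ≤ ∏ k : Fin n, 1 / T.da (G i k) := by
    intro i
    have h1 : (∏ k : Fin n, 1 / T.da (G i k)) = 1 / P i := by
      simp only [hP, hG]
      rw [← Fin.prod_univ_eq_prod_range (fun k => T.da (F i k)) n,
        Finset.prod_div_distrib, Finset.prod_const_one]
    rw [h1]
    exact one_div_le_one_div_of_le (hPpos i) (hPd i)
  have hnn : ∀ v : Fin n → ℕ, 0 ≤ ∏ k, 1 / T.da (v k) :=
    fun v => Finset.prod_nonneg fun k _ => one_div_nonneg.mpr (T.da_pos _).le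
  have hcomp : Summable (fun i => ∏ k : Fin n, 1 / T.da (G i k)) :=
    hsum.comp_injective hGinj
  have hS1 : Summable (fun i => 1 / dc i) :=
    Summable.of_nonneg_of_le (fun i => one_div_nonneg.mpr (hdcpos i).le) hbound hcomp
  refine ⟨hS1, ?_⟩
  calc (∑' i, 1 / dc i) ≤ ∑' v : Fin n → ℕ, ∏ k, 1 / T.da (v k) :=
        Summable.tsum_le_tsum_of_inj G hGinj (fun v _ => hnn v) hbound hS1 hsum
    _ = (∑' i, 1 / T.da i) ^ n := hval
end

section
/- Let τ belong to class 𝒯 and suppose x = 0 is not a limit point of the left partition endpoints {a_i}, with τ'(0) = 1/α > 1. Then for every n ≥ 1, x = 0 is not a limit point of the left endpoints {a_i^{(n)}} of the partition 𝒫^{(n)} for τ^n, and (τ^n)'(0) = 1/α^n > 1. -/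
open Set Filter MeasureTheory Topology

/-! The branch of `τ` at `0` is positive and `τ x → 0` as `x → 0⁺`, so every iterate `τᵏ` tends
to `0` from the right. Hence on a short interval `(0, δ)` the iterates `τ⁰, …, τⁿ⁻¹` all stay in
that branch: `(0, δ)` lies in a single element of `𝒫⁽ⁿ⁾`, which rules out other left endpoints in
`(0, δ)`, and by the chain rule `(τⁿ)'(x)` is the product of the `n` factors `τ'(τᵏ x) → 1/α`. -/

namespace PCT

variable (T : PCT)

theorem pos_of_mem_branch {i : ℕ} {x : ℝ} (hx : x ∈ Ioo (T.a i) (T.b i)) : 0 < T.τ x := by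
  obtain ⟨y, hay, hyx⟩ := exists_between hx.1
  have hy : y ∈ Ioo (T.a i) (T.b i) := ⟨hay, hyx.trans hx.2⟩
  have h_nonneg : 0 ≤ T.τ y := by
    refine le_of_tendsto (T.lim_zero i) ?_
    filter_upwards [Ioo_mem_nhdsGT hay] with z hz
    exact (T.mono i ⟨hz.1, hz.2.trans hy.2⟩ hy hz.2).le
  exact h_nonneg.trans_lt (T.mono i hy hx hyx)

theorem tendsto_nhdsGT (i : ℕ) : Tendsto T.τ (𝓝[>] T.a i) (𝓝[>] 0) :=
  tendsto_nhdsWithin_iff.2 ⟨T.lim_zero i,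
    eventually_of_mem (Ioo_mem_nhdsGT (T.lt i)) fun _ hx ↦ T.pos_of_mem_branch hx⟩

variable {T} {i₀ : ℕ}

theorem tendsto_iterate_nhdsGT_zero (hi₀ : T.a i₀ = 0) (k : ℕ) :
    Tendsto T.τ^[k] (𝓝[>] 0) (𝓝[>] 0) :=
  (hi₀ ▸ T.tendsto_nhdsGT i₀).iterate k

theorem eventually_iterate_mem_branch (hi₀ : T.a i₀ = 0) (n : ℕ) :
    ∀ᶠ x in 𝓝[>] 0, ∀ k ∈ Finset.range n, T.τ^[k] x ∈ Ioo (T.a i₀) (T.b i₀) := by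
  refine (Finset.range n).eventually_all.2 fun k _ ↦ tendsto_iterate_nhdsGT_zero hi₀ k ?_
  exact hi₀ ▸ Ioo_mem_nhdsGT (T.lt i₀)

theorem exists_isBranchSeq_zero (hi₀ : T.a i₀ = 0) (n : ℕ) :
    ∃ δ, IsBranchSeq T n 0 δ := by
  obtain ⟨δ, hδ, hsub⟩ := mem_nhdsGT_iff_exists_Ioo_subset.1 (eventually_iterate_mem_branch hi₀ n)
  exact ⟨δ, hδ, fun k hk ↦ ⟨i₀, image_subset_iff.2 fun x hx ↦ hsub hx k (Finset.mem_range.2 hk)⟩⟩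

end PCT

theorem hasDerivAt_iterate_prod {𝕜 : Type*} [NontriviallyNormedField 𝕜] {f : 𝕜 → 𝕜} {x : 𝕜}
    {n : ℕ} (hf : ∀ k ∈ Finset.range n, DifferentiableAt 𝕜 f (f^[k] x)) :
    HasDerivAt f^[n] (∏ k ∈ Finset.range n, deriv f (f^[k] x)) x := by
  induction n with
  | zero => simpa using hasDerivAt_id x
  | succ n ih =>
    have hfn := (hf n (Finset.self_mem_range_succ n)).hasDerivAt
    have ih := ih fun k hk ↦ hf k (Finset.range_subset_range.2 n.le_succ hk)
    rw [Function.iterate_succ', Finset.prod_range_succ, mul_comm]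
    exact hfn.comp x ih

theorem PCT.tendsto_deriv_iterate {T : PCT} {i₀ : ℕ} (hi₀ : T.a i₀ = 0) (n : ℕ) :
    Tendsto (deriv T.τ^[n]) (𝓝[>] 0) (𝓝 (T.da i₀ ^ n)) := by
  have h_factor (k : ℕ) : Tendsto (fun x ↦ deriv T.τ (T.τ^[k] x)) (𝓝[>] 0) (𝓝 (T.da i₀)) :=
    (hi₀ ▸ T.deriv_lim i₀).comp (tendsto_iterate_nhdsGT_zero hi₀ k)
  have h_prod := tendsto_finsetProd (Finset.range n) fun k _ ↦ h_factor k
  rw [Finset.prod_const, Finset.card_range] at h_prod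
  refine h_prod.congr' ?_
  filter_upwards [eventually_iterate_mem_branch hi₀ n] with x hx
  exact (hasDerivAt_iterate_prod fun k hk ↦ T.diff i₀ _ (hx k hk)).deriv.symm

section BranchIntervals

variable {T : PCT} {n : ℕ} {c d c' d' : ℝ}

namespace IsBranchSeq

theorem nonneg_left (h : IsBranchSeq T n c d) (hn : 1 ≤ n) : 0 ≤ c := by
  obtain ⟨i, hi⟩ := h.2 0 hn
  have hsub : Ioo c d ⊆ Icc 0 1 := by simpa using hi.trans (T.sub i)
  exact (closure_minimal hsub isClosed_Icc (by simp [closure_Ioo h.1.ne, h.1.le])).1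

theorem union (h : IsBranchSeq T n c d) (h' : IsBranchSeq T n c' d') (hc : c' ≤ c)
    (hcd' : c < d') : IsBranchSeq T n c' (max d d') := by
  refine ⟨h'.1.trans_le (le_max_right _ _), fun k hk ↦ ?_⟩
  obtain ⟨i, hi⟩ := h.2 k hk
  obtain ⟨j, hj⟩ := h'.2 k hk
  obtain ⟨t, hct, ht⟩ := exists_between (lt_min h.1 hcd')
  have hij : i = j := by
    by_contra hne
    exact (T.disj hne).ne_of_mem (hi ⟨t, ⟨hct, ht.trans_le (min_le_left _ _)⟩, rfl⟩)
      (hj ⟨t, ⟨hc.trans_lt hct, ht.trans_le (min_le_right _ _)⟩, rfl⟩) rfl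
  subst hij
  refine ⟨i, ?_⟩
  rintro _ ⟨x, hx, rfl⟩
  rcases lt_or_ge x d' with hxd' | hxd'
  · exact hj ⟨x, ⟨hx.1, hxd'⟩, rfl⟩
  · have hxd : x < d := by simpa [hxd'.not_gt] using hx.2
    exact hi ⟨x, ⟨hcd'.trans_le hxd', hxd⟩, rfl⟩

end IsBranchSeq

theorem IsBranchInterval.left_eq (h : IsBranchInterval T n c d) (h' : IsBranchSeq T n c' d')
    (hc : c' ≤ c) (hcd' : c < d') : c' = c :=
  (h.2 c' (max d d') hc (le_max_left _ _) (h.1.union h' hc hcd')).1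

end BranchIntervals

theorem PCT.not_accPt_zero_branchInterval_left {T : PCT} {i₀ : ℕ} (hi₀ : T.a i₀ = 0) {n : ℕ}
    (hn : 1 ≤ n) : ¬ AccPt (0:ℝ) (𝓟 {c : ℝ | ∃ d, IsBranchInterval T n c d}) := by
  obtain ⟨δ, hδ⟩ := PCT.exists_isBranchSeq_zero hi₀ n
  intro hacc
  obtain ⟨c, ⟨hcδ, d, hcd⟩, hc0⟩ := accPt_iff_nhds.1 hacc (Iio δ) (Iio_mem_nhds hδ.1)
  exact hc0 (hcd.left_eq hδ (hcd.1.nonneg_left hn) hcδ).symm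

theorem iterate_expand_at_zero_general (T : PCT)
    (α : ℝ) (hα0 : 0 < α) (hα1 : α < 1)
    (i₀ : ℕ) (hi₀ : T.a i₀ = 0) (hdi₀ : T.da i₀ = 1 / α)
    (n : ℕ) (hn : 1 ≤ n) :
    (¬ AccPt (0:ℝ) (Filter.principal {c : ℝ | ∃ d, IsBranchInterval T n c d})) ∧
    Filter.Tendsto (deriv (T.τ^[n])) (nhdsWithin 0 (Set.Ioi (0:ℝ)))
      (nhds (1 / α ^ n)) ∧ 1 < 1 / α ^ n := by
  refine ⟨PCT.not_accPt_zero_branchInterval_left hi₀ hn, ?_, ?_⟩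
  · simpa [hdi₀, one_div_pow] using PCT.tendsto_deriv_iterate hi₀ n
  · exact one_lt_one_div (pow_pos hα0 n) (pow_lt_one₀ hα0.le hα1 (by omega))

/-- Proposition 2.1.7 (f). Let `τ ∈ 𝒯` and suppose `0` is not a limit
point of the left partition endpoints `{aᵢ}`, with `τ'(0) = 1/α > 1` (the right limit at
the branch starting at `0`). Then for every `n ≥ 1`, `0` is not a limit point of the left
endpoints of the partition `𝒫⁽ⁿ⁾` of `τⁿ`, and `(τⁿ)'(0) = 1/αⁿ > 1` (as a right limit
at `0`). -/
theorem iterate_expand_at_zero (T : PCT)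
    (hna : ¬ AccPt (0:ℝ) (Filter.principal (Set.range T.a)))
    (α : ℝ) (hα0 : 0 < α) (hα1 : α < 1)
    (i₀ : ℕ) (hi₀ : T.a i₀ = 0) (hdi₀ : T.da i₀ = 1 / α)
    (n : ℕ) (hn : 1 ≤ n) :
    (¬ AccPt (0:ℝ) (Filter.principal {c : ℝ | ∃ d, IsBranchInterval T n c d})) ∧
    Filter.Tendsto (deriv (T.τ^[n])) (nhdsWithin 0 (Set.Ioi (0:ℝ)))
      (nhds (1 / α ^ n)) ∧ 1 < 1 / α ^ n :=
  iterate_expand_at_zero_general T α hα0 hα1 i₀ hi₀ hdi₀ n hn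
end
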